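/- arXiv:0911.4412 — 3 statements merged into one kernel-verified Lean document; each statement's English description precedes it below -/
import Mathlib

section
/- Let $E$ be a real locally convex space, $C \subseteq E$ a nonempty closed convex set, and $B(C) := \{\alpha \in E' : \inf \alpha(C) > -\infty\}$ the set of continuous linear functionals bounded below on $C$. Then the recession cone of $C$ equals the dual cone of $B(C)$: $\lim(C) = \{v \in E : \alpha(v) \geq 0 \text{ for all } \alpha \in B(C)\}$. -/
/-- For a nonempty closed convex subset `C` of a real locally convex space `E`, the recession
cone `lim(C) = {v : C + v ⊆ C}` coincides with the dual cone of
`B(C) = {α ∈ E' : inf α(C) > -∞}`, the set of continuous linear functionals bounded below on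
`C`. -/
theorem recessionCone_eq_dualCone {E : Type*} [AddCommGroup E] [Module ℝ E] [TopologicalSpace E]
    [IsTopologicalAddGroup E] [ContinuousSMul ℝ E] [LocallyConvexSpace ℝ E]
    (C : Set E) (hconv : Convex ℝ C) (hne : C.Nonempty) (hcl : IsClosed C) :
    {v : E | ∀ x ∈ C, x + v ∈ C} =
      {v : E | ∀ α : E →L[ℝ] ℝ, BddBelow (α '' C) → 0 ≤ α v} := by
  ext v
  simp only [Set.mem_setOf_eq]
  constructor
  · intro hv α hbdd
    obtain ⟨m, hm⟩ := hbdd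
    obtain ⟨x₀, hx₀⟩ := hne
    have key : ∀ n : ℕ, x₀ + n • v ∈ C := by
      intro n
      induction n with
      | zero => simpa using hx₀
      | succ n ih =>
        have h := hv _ ih
        have : x₀ + (n + 1) • v = x₀ + n • v + v := by
          rw [add_smul, one_smul, add_assoc]
        rwa [this]
    by_contra hneg
    push_neg at hneg
    obtain ⟨n, hn⟩ := exists_nat_gt ((α x₀ - m) / (-α v))
    have h1 : m ≤ α (x₀ + n • v) := hm ⟨_, key n, rfl⟩
    rw [map_add, map_nsmul, nsmul_eq_mul] at h1
    rw [div_lt_iff₀ (by linarith : (0:ℝ) < -α v)] at hn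
    nlinarith
  · intro hv x hx
    by_contra hxv
    obtain ⟨α, u, hu1, hu2⟩ := geometric_hahn_banach_point_closed hconv hcl hxv
    have hbdd : BddBelow (α '' C) := ⟨u, by rintro _ ⟨c, hc, rfl⟩; exact (hu2 c hc).le⟩
    have h0 := hv α hbdd
    have h2 := hu2 x hx
    rw [map_add] at hu1
    linarith
end

section
/- Let $\mathcal{H}$ be a complex Hilbert space and $A$ an antilinear Hilbert–Schmidt operator on $\mathcal{H}$ with $A^* = A$ (where $\langle A^* v, w\rangle = \langle Aw, v\rangle$). Then there is a unique element $\hat{A} \in S^2(\mathcal{H})$ with $\langle \hat{A}, f_1 \vee f_2\rangle = \langle A f_1, f_2\rangle$ for all $f_1, f_2 \in \mathcal{H}$, and it satisfies $\|\hat{A}\|^2 = \tfrac{1}{2}\|A\|_2^2$, where $\|A\|_2$ is the Hilbert–Schmidt norm. -/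
open scoped ComplexConjugate

/-- Let `A` be an antilinear hermitian Hilbert–Schmidt operator on a complex Hilbert space
`H` (hermitian: `⟪Av,w⟫ = ⟪Aw,v⟫`).  In the symmetric square `S²(H)` (modelled abstractly by
a Hilbert space `S2` with a symmetric product map `sq` satisfying
`⟪f₁∨f₂, g₁∨g₂⟫ = ⟪f₁,g₁⟫⟪f₂,g₂⟫ + ⟪f₁,g₂⟫⟪f₂,g₁⟫` and with total image), there is a unique
element `Â ∈ S²(H)` with `⟪Â, f₁ ∨ f₂⟫ = ⟪Af₁, f₂⟫` for all `f₁, f₂`, and it satisfies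
`‖Â‖² = ½‖A‖₂²` where `‖A‖₂` is the Hilbert–Schmidt norm. -/
theorem hat_of_antilinear_HS {H : Type*} [NormedAddCommGroup H] [InnerProductSpace ℂ H]
    [CompleteSpace H] {ι : Type*} (b : HilbertBasis ι ℂ H)
    (S2 : Type*) [NormedAddCommGroup S2] [InnerProductSpace ℂ S2] [CompleteSpace S2]
    (sq : H → H → S2)
    (hsq_symm : ∀ f₁ f₂ : H, sq f₁ f₂ = sq f₂ f₁)
    (hsq_inner : ∀ f₁ f₂ g₁ g₂ : H,
      (inner ℂ (sq f₁ f₂) (sq g₁ g₂) : ℂ) =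
        (inner ℂ f₁ g₁ : ℂ) * (inner ℂ f₂ g₂ : ℂ) + (inner ℂ f₁ g₂ : ℂ) * (inner ℂ f₂ g₁ : ℂ))
    (htotal : (Submodule.span ℂ {x : S2 | ∃ f₁ f₂ : H, x = sq f₁ f₂}).topologicalClosure = ⊤)
    (A : H →ₛₗ[starRingEnd ℂ] H) (hAcont : Continuous A)
    (hherm : ∀ v w : H, (inner ℂ (A v) w : ℂ) = (inner ℂ (A w) v : ℂ))
    (hHS : Summable fun j : ι => ‖A (b j)‖^2) :
    ∃ Ahat : S2,
      (∀ f₁ f₂ : H, (inner ℂ Ahat (sq f₁ f₂) : ℂ) = (inner ℂ (A f₁) f₂ : ℂ)) ∧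
      ‖Ahat‖^2 = (1/2) * ∑' j : ι, ‖A (b j)‖^2 ∧
      ∀ B : S2, (∀ f₁ f₂ : H, (inner ℂ B (sq f₁ f₂) : ℂ) = (inner ℂ (A f₁) f₂ : ℂ)) → B = Ahat := by
  classical
  set g : ι → S2 := fun j => sq (b j) (A (b j)) with hgdef
  have hb := b.orthonormal
  -- Parseval
  have hpar : ∀ x : H, HasSum (fun k : ι => ‖(inner ℂ x (b k) : ℂ)‖^2) (‖x‖^2) := by
    intro x
    have h := Complex.reCLM.hasSum (b.hasSum_inner_mul_inner x x)
    have e1 : (fun k : ι => Complex.reCLM ((inner ℂ x (b k) : ℂ) * (inner ℂ (b k) x : ℂ)))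
        = fun k : ι => ‖(inner ℂ x (b k) : ℂ)‖^2 := by
      funext k
      rw [← inner_conj_symm (b k) x, Complex.mul_conj']
      simp [← Complex.ofReal_pow]
    have e2 : Complex.reCLM (inner ℂ x x : ℂ) = ‖x‖^2 := by
      rw [inner_self_eq_norm_sq_to_K]
      simp [← Complex.ofReal_pow]
    rwa [e1, e2] at h
  -- the bound on finite partial sums
  have hbound : ∀ F : Finset ι, ‖∑ j ∈ F, g j‖^2 ≤ 2 * ∑ j ∈ F, ‖A (b j)‖^2 := by
    intro F
    have hinner : (inner ℂ (∑ j ∈ F, g j) (∑ j ∈ F, g j) : ℂ)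
        = ∑ j ∈ F, ∑ k ∈ F, ((inner ℂ (b j) (b k) : ℂ) * (inner ℂ (A (b j)) (A (b k)) : ℂ)
            + (inner ℂ (b j) (A (b k)) : ℂ) * (inner ℂ (A (b j)) (b k) : ℂ)) := by
      rw [sum_inner]
      refine Finset.sum_congr rfl fun j _ => ?_
      rw [inner_sum]
      exact Finset.sum_congr rfl fun k _ => hsq_inner _ _ _ _
    have hre : ‖∑ j ∈ F, g j‖^2
        = ∑ j ∈ F, ∑ k ∈ F, (((inner ℂ (b j) (b k) : ℂ) * (inner ℂ (A (b j)) (A (b k)) : ℂ)).re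
            + ((inner ℂ (b j) (A (b k)) : ℂ) * (inner ℂ (A (b j)) (b k) : ℂ)).re) := by
      have := congrArg Complex.re hinner
      rw [inner_self_eq_norm_sq_to_K] at this
      simp only [Complex.re_sum, Complex.add_re] at this
      simpa [← Complex.ofReal_pow] using this
    rw [hre]
    have key : ∀ j ∈ F,
        (∑ k ∈ F, (((inner ℂ (b j) (b k) : ℂ) * (inner ℂ (A (b j)) (A (b k)) : ℂ)).re
            + ((inner ℂ (b j) (A (b k)) : ℂ) * (inner ℂ (A (b j)) (b k) : ℂ)).re))
          ≤ 2 * ‖A (b j)‖^2 := by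
      intro j hjF
      rw [Finset.sum_add_distrib]
      have t1 : ∑ k ∈ F, (((inner ℂ (b j) (b k) : ℂ) * (inner ℂ (A (b j)) (A (b k)) : ℂ)).re)
          ≤ ‖A (b j)‖^2 := by
        have : ∀ k ∈ F, (((inner ℂ (b j) (b k) : ℂ) * (inner ℂ (A (b j)) (A (b k)) : ℂ)).re)
            = if j = k then ‖A (b j)‖^2 else 0 := by
          intro k _
          rcases eq_or_ne j k with rfl | hne
          · rw [orthonormal_iff_ite.mp hb j j]
            simp [inner_self_eq_norm_sq_to_K, ← Complex.ofReal_pow]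
          · rw [orthonormal_iff_ite.mp hb j k]
            simp [hne]
        rw [Finset.sum_congr rfl this, Finset.sum_ite_eq, if_pos hjF]
      have t2 : ∑ k ∈ F, (((inner ℂ (b j) (A (b k)) : ℂ) * (inner ℂ (A (b j)) (b k) : ℂ)).re)
          ≤ ‖A (b j)‖^2 := by
        have e : ∀ k, (((inner ℂ (b j) (A (b k)) : ℂ) * (inner ℂ (A (b j)) (b k) : ℂ)).re)
            = ‖(inner ℂ (A (b j)) (b k) : ℂ)‖^2 := by
          intro k
          have h1 : (inner ℂ (b j) (A (b k)) : ℂ) = conj (inner ℂ (A (b j)) (b k) : ℂ) := by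
            rw [← inner_conj_symm (b j) (A (b k)), hherm (b k) (b j)]
          rw [h1, Complex.conj_mul']
          simp [← Complex.ofReal_pow]
        simp_rw [e]
        exact sum_le_hasSum F (fun _ _ => sq_nonneg _) (hpar (A (b j)))
      linarith
    calc ∑ j ∈ F, ∑ k ∈ F, _ ≤ ∑ j ∈ F, 2 * ‖A (b j)‖^2 := Finset.sum_le_sum key
    _ = 2 * ∑ j ∈ F, ‖A (b j)‖^2 := by rw [Finset.mul_sum]
  -- summability of g
  have hsum : Summable g := by
    rw [summable_iff_vanishing]
    intro e he
    obtain ⟨ε, hε, hball⟩ := Metric.mem_nhds_iff.mp he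
    obtain ⟨s, hs⟩ := summable_iff_vanishing.mp hHS (Metric.ball 0 (ε^2/2))
        (Metric.ball_mem_nhds 0 (by positivity))
    refine ⟨s, fun t ht => hball ?_⟩
    have h1 := hs t ht
    rw [Metric.mem_ball, dist_zero_right] at h1 ⊢
    have h1' : ∑ j ∈ t, ‖A (b j)‖^2 < ε^2/2 := (le_abs_self _).trans_lt (by simpa using h1)
    have h2 := hbound t
    have hn : (0:ℝ) ≤ ‖∑ j ∈ t, g j‖ := norm_nonneg _
    nlinarith [sq_nonneg (‖∑ j ∈ t, g j‖ - ε)]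
  set S : S2 := ∑' j, g j with hSdef
  have hS : HasSum g S := hsum.hasSum
  -- inner against S as a sum
  have hSy : ∀ y : S2, HasSum (fun j => (inner ℂ (g j) y : ℂ)) (inner ℂ S y : ℂ) := by
    intro y
    have h1 := (innerSL ℂ y).hasSum hS
    have h2 := (Complex.conjCLE.toContinuousLinearMap).hasSum h1
    simpa using h2
  have hmain : ∀ f₁ f₂ : H, (inner ℂ S (sq f₁ f₂) : ℂ) = 2 * (inner ℂ (A f₁) f₂ : ℂ) := by
    intro f₁ f₂
    have h1 : HasSum (fun j : ι => (inner ℂ (A f₂) (b j) : ℂ) * (inner ℂ (b j) f₁ : ℂ))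
        (inner ℂ (A f₂) f₁ : ℂ) := b.hasSum_inner_mul_inner _ _
    have h2 : HasSum (fun j : ι => (inner ℂ (A f₁) (b j) : ℂ) * (inner ℂ (b j) f₂ : ℂ))
        (inner ℂ (A f₁) f₂ : ℂ) := b.hasSum_inner_mul_inner _ _
    have h3 : HasSum (fun j => (inner ℂ (g j) (sq f₁ f₂) : ℂ))
        ((inner ℂ (A f₂) f₁ : ℂ) + (inner ℂ (A f₁) f₂ : ℂ)) := by
      have h4 := h1.add h2
      have e : (fun j => (inner ℂ (g j) (sq f₁ f₂) : ℂ))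
          = fun j : ι => (inner ℂ (A f₂) (b j) : ℂ) * (inner ℂ (b j) f₁ : ℂ)
              + (inner ℂ (A f₁) (b j) : ℂ) * (inner ℂ (b j) f₂ : ℂ) := by
        funext j
        show (inner ℂ (sq (b j) (A (b j))) (sq f₁ f₂) : ℂ) = _
        rw [hsq_inner, hherm (b j) f₂, hherm (b j) f₁]
        ring
      rw [e]; exact h4
    have h5 := (hSy (sq f₁ f₂)).unique h3
    rw [h5, hherm f₂ f₁]; ring
  refine ⟨(2:ℂ)⁻¹ • S, ?_, ?_, ?_⟩
  · intro f₁ f₂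
    rw [inner_smul_left, hmain, map_inv₀, Complex.conj_ofNat]
    ring
  · have hprop : ∀ f₁ f₂ : H, (inner ℂ ((2:ℂ)⁻¹ • S) (sq f₁ f₂) : ℂ) = (inner ℂ (A f₁) f₂ : ℂ) := by
      intro f₁ f₂
      rw [inner_smul_left, hmain, map_inv₀, Complex.conj_ofNat]
      ring
    have hAg : ∀ j : ι, (inner ℂ ((2:ℂ)⁻¹ • S) (g j) : ℂ) = ((‖A (b j)‖^2 : ℝ) : ℂ) := by
      intro j
      have h := hprop (b j) (A (b j))
      rw [show g j = sq (b j) (A (b j)) from rfl, h, inner_self_eq_norm_sq_to_K]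
      norm_cast
    have h4 : HasSum (fun j => (inner ℂ ((2:ℂ)⁻¹ • S) (g j) : ℂ)) (inner ℂ ((2:ℂ)⁻¹ • S) S : ℂ) :=
      (innerSL ℂ ((2:ℂ)⁻¹ • S)).hasSum hS
    have h5 : HasSum (fun j => ((‖A (b j)‖^2 : ℝ) : ℂ)) (((∑' j : ι, ‖A (b j)‖^2 : ℝ)) : ℂ) :=
      Complex.ofRealCLM.hasSum hHS.hasSum
    have h6 : (inner ℂ ((2:ℂ)⁻¹ • S) S : ℂ) = ((∑' j : ι, ‖A (b j)‖^2 : ℝ) : ℂ) := by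
      refine HasSum.unique ?_ h5
      have e : (fun j => ((‖A (b j)‖^2 : ℝ) : ℂ)) = fun j => (inner ℂ ((2:ℂ)⁻¹ • S) (g j) : ℂ) := by
        funext j; rw [hAg j]
      rw [e]; exact h4
    have h7 : (inner ℂ ((2:ℂ)⁻¹ • S) ((2:ℂ)⁻¹ • S) : ℂ)
        = (2:ℂ)⁻¹ * ((∑' j : ι, ‖A (b j)‖^2 : ℝ) : ℂ) := by
      rw [inner_smul_right, h6]
    rw [inner_self_eq_norm_sq_to_K] at h7
    rw [show ((2:ℂ))⁻¹ * (((∑' j : ι, ‖A (b j)‖^2 : ℝ)) : ℂ)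
        = (((1/2 * ∑' j : ι, ‖A (b j)‖^2 : ℝ)) : ℂ) by push_cast; ring] at h7
    have h8 : ((‖(2:ℂ)⁻¹ • S‖^2 : ℝ) : ℂ)
        = (((1/2 * ∑' j : ι, ‖A (b j)‖^2 : ℝ)) : ℂ) := by rw [Complex.ofReal_pow]; exact h7
    exact Complex.ofReal_injective h8
  · intro B hB
    have hprop : ∀ f₁ f₂ : H, (inner ℂ ((2:ℂ)⁻¹ • S) (sq f₁ f₂) : ℂ) = (inner ℂ (A f₁) f₂ : ℂ) := by
      intro f₁ f₂
      rw [inner_smul_left, hmain, map_inv₀, Complex.conj_ofNat]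
      ring
    have hker : (Submodule.span ℂ {x : S2 | ∃ f₁ f₂ : H, x = sq f₁ f₂}).topologicalClosure
        ≤ LinearMap.ker (innerSL ℂ (B - (2:ℂ)⁻¹ • S) : S2 →ₗ[ℂ] ℂ) := by
      apply Submodule.topologicalClosure_minimal
      · rw [Submodule.span_le]
        rintro x ⟨f₁, f₂, rfl⟩
        rw [SetLike.mem_coe, LinearMap.mem_ker]
        show (inner ℂ (B - (2:ℂ)⁻¹ • S) (sq f₁ f₂) : ℂ) = 0
        rw [inner_sub_left, hB, hprop, sub_self]
      · exact ContinuousLinearMap.isClosed_ker _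
    rw [htotal] at hker
    have hmem := hker (Submodule.mem_top : B - (2:ℂ)⁻¹ • S ∈ ⊤)
    rw [LinearMap.mem_ker] at hmem
    have : (inner ℂ (B - (2:ℂ)⁻¹ • S) (B - (2:ℂ)⁻¹ • S) : ℂ) = 0 := hmem
    have := inner_self_eq_zero.mp this
    exact sub_eq_zero.mp this
end

section
/- Let $\mathcal{H}$ be a complex Hilbert space with complex structure $I$ (multiplication by $i$) and $\mathfrak{p} = \{x \in \mathfrak{sp}(\mathcal{H}) : Ix = -xI\}$ the space of antilinear elements of the symplectic Lie algebra. If $\mathfrak{i} \subseteq \mathfrak{p}$ is a Lie algebra ideal of $\mathfrak{sp}(\mathcal{H})$ contained in $\mathfrak{p}$, then $\mathfrak{i} = \{0\}$. Key step: for $X \in \mathfrak{p}$, $[X,[I,X]] = 0$ implies $X = 0$. -/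
/-- Let `H` be a complex Hilbert space with complex structure `J` (multiplication by `i`),
`sp(H)` the symplectic Lie algebra of bounded real-linear operators for
`ω(v,w) = Im⟪v,w⟫`, and `p ⊆ sp(H)` the subspace of antilinear elements.  Any Lie algebra
ideal of `sp(H)` contained in `p` is trivial.  The key step is: for `X ∈ p`,
`[X,[J,X]] = 0` implies `X = 0`. -/
theorem antilinear_ideal_trivial {H : Type*} [NormedAddCommGroup H] [InnerProductSpace ℂ H]
    (J : H →L[ℝ] H) (hJ : ∀ v : H, J v = Complex.I • v)
    (sp : Set (H →L[ℝ] H))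
    (hsp : sp = {X : H →L[ℝ] H |
      ∀ v w : H, ((inner ℂ (X v) w : ℂ)).im + ((inner ℂ v (X w) : ℂ)).im = 0})
    (p : Set (H →L[ℝ] H))
    (hp : p = sp ∩ {X : H →L[ℝ] H | ∀ v : H, J (X v) = - X (J v)})
    (i : Set (H →L[ℝ] H))
    (hisub : i ⊆ p)
    (hadd : ∀ X Y : H →L[ℝ] H, X ∈ i → Y ∈ i → X + Y ∈ i)
    (hsmul : ∀ (c : ℝ) (X : H →L[ℝ] H), X ∈ i → c • X ∈ i)
    (hideal : ∀ X ∈ i, ∀ Y ∈ sp, Y * X - X * Y ∈ i) :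
    (∀ X ∈ p, X * (J * X - X * J) - (J * X - X * J) * X = 0 → X = 0) ∧
    i ⊆ {0} := by
  subst hsp hp
  -- `J ∘ J = -id`
  have hJJ : ∀ v : H, J (J v) = -v := by
    intro v
    rw [hJ, hJ, smul_smul, Complex.I_mul_I, neg_one_smul]
  -- key lemma: an antilinear element of sp with `X ∘ X = 0` is zero
  have key : ∀ X : H →L[ℝ] H,
      (∀ v w : H, ((inner ℂ (X v) w : ℂ)).im + ((inner ℂ v (X w) : ℂ)).im = 0) →
      (∀ v : H, J (X v) = - X (J v)) →
      (∀ v : H, X (X v) = 0) → X = 0 := by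
    intro X hs ha hsq
    have hXiv : ∀ v : H, X (Complex.I • v) = -(Complex.I • X v) := by
      intro v
      have h := ha v
      rw [hJ, hJ] at h
      have h2 := congrArg Neg.neg h
      rw [neg_neg] at h2
      exact h2.symm
    have hsym : ∀ v w : H, (inner ℂ (X v) w : ℂ) = inner ℂ (X w) v := by
      intro v w
      have h1 := hs v w
      have h2 := hs (Complex.I • v) w
      rw [hXiv v] at h2
      have hb : (inner ℂ v (X w) : ℂ) = starRingEnd ℂ (inner ℂ (X w) v) :=
        (inner_conj_symm _ _).symm
      have hbre := congrArg Complex.re hb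
      have hbim := congrArg Complex.im hb
      simp only [Complex.conj_re, Complex.conj_im] at hbre hbim
      simp only [inner_neg_left, inner_smul_left, Complex.conj_I, Complex.neg_im,
        Complex.mul_im, Complex.neg_re, neg_mul,
        Complex.I_re, Complex.I_im, Complex.mul_re] at h1 h2
      apply Complex.ext <;> linarith
    ext u
    have : (inner ℂ (X u) (X u) : ℂ) = 0 := by
      rw [hsym u (X u), hsq u, inner_zero_left]
    simpa using inner_self_eq_zero.mp this
  -- pointwise formula for the double bracket
  have hZv : ∀ X : H →L[ℝ] H, (∀ v : H, J (X v) = - X (J v)) →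
      ∀ v : H, (X * (J * X - X * J) - (J * X - X * J) * X) v
        = -(4:ℝ) • X (X (J v)) := by
    intro X ha v
    simp only [ContinuousLinearMap.sub_apply, ContinuousLinearMap.mul_apply]
    rw [ha (X v), ha v]
    simp only [map_neg, map_sub, neg_neg]
    module
  constructor
  · -- key step
    intro X hX hcomm
    obtain ⟨hs, ha⟩ := hX
    refine key X hs ha ?_
    intro u
    have hcv : ∀ v : H, X (X (J v)) = 0 := by
      intro v
      have h := congrArg (fun f : H →L[ℝ] H => f v) hcomm
      simp only [ContinuousLinearMap.zero_apply] at h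
      rw [hZv X ha v] at h
      have := smul_eq_zero.mp h
      simpa using this
    have := hcv (-(J u))
    rw [map_neg, hJJ, neg_neg] at this
    exact this
  · -- the ideal is trivial
    intro X hXi
    obtain ⟨hs, ha⟩ := hisub hXi
    have hXsp : X ∈ {X : H →L[ℝ] H |
        ∀ v w : H, ((inner ℂ (X v) w : ℂ)).im + ((inner ℂ v (X w) : ℂ)).im = 0} := hs
    have hJsp : J ∈ {X : H →L[ℝ] H |
        ∀ v w : H, ((inner ℂ (X v) w : ℂ)).im + ((inner ℂ v (X w) : ℂ)).im = 0} := by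
      intro v w
      rw [hJ v, hJ w]
      simp only [inner_smul_left, inner_smul_right, Complex.conj_I]
      simp [Complex.mul_im]
    have hZ1 : J * X - X * J ∈ i := hideal X hXi J hJsp
    have hZ : X * (J * X - X * J) - (J * X - X * J) * X ∈ i :=
      hideal _ hZ1 X hXsp
    obtain ⟨-, haZ⟩ := hisub hZ
    have hsq : ∀ v : H, X (X v) = 0 := by
      intro v
      have h := haZ v
      rw [hZv X ha v, hZv X ha (J v)] at h
      rw [map_smul, ha (X (J v)), ha (J v), hJJ v] at h
      simp only [map_neg, neg_neg, smul_neg, neg_smul] at h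
      have h4 := eq_neg_iff_add_eq_zero.mp h
      rw [← add_smul] at h4
      norm_num at h4
      exact h4
    have : X = 0 := key X hs ha hsq
    simp [this]
end
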